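/- Let K ≥ 1 and for each k ∈ [K] let W_k ∈ ℝ^{n_k × n_{k-1}}, b_k ∈ ℝ^{n_k}, and let f : ℝ → ℝ. Define block matrices A_k ∈ ℝ^{(N+1)×(N+1)} (with N = n_1 + ⋯ + n_K and one extra bias coordinate fixed to 1) such that A_k acts as identity on all coordinates except those of block k, where its rows are [0 ⋯ 0, W_k, 0 ⋯ 0, b_k] reading the input block k−1 and the bias coordinate. Then for every input x ∈ ℝ^{n_0}, the synchronous iteration h^{(k)} = f(A_k h^{(k-1)}) (with f applied only to updated coordinates, bias coordinate held at 1), started from h^{(0)} = (x, 0, …, 0, 1), yields after K steps output coordinates equal to the MLP output T_K ∘ f ∘ T_{K-1} ∘ ⋯ ∘ f ∘ T_1(x), where T_k(z) = W_k z + b_k. -/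

import Mathlib

/-- Nodes of the GNM graph simulating a `K`-layer MLP: one node per neuron of each layer
`0, …, K` (layer `0` is the input), plus one bias node. -/
abbrev MLPNode (K : ℕ) (n : ℕ → ℕ) : Type :=
  ((k : Fin (K + 1)) × Fin (n k)) ⊕ Unit

/-- The block matrix `A_k`: it acts as identity on all coordinates except those of block
`k+1`, whose rows read the previous block through `W k` and the bias coordinate through
`b k`; the bias row is `(0, …, 0, 1)`. -/
def mlpBlockMat (K : ℕ) (n : ℕ → ℕ)
    (W : (k : ℕ) → Matrix (Fin (n (k + 1))) (Fin (n k)) ℝ)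
    (b : (k : ℕ) → Fin (n (k + 1)) → ℝ) (k : ℕ) :
    Matrix (MLPNode K n) (MLPNode K n) ℝ :=
  fun i j =>
    match i, j with
    | Sum.inl ⟨l, a⟩, Sum.inl ⟨l', a'⟩ =>
        if hl : (l : ℕ) = k + 1 then
          if hl' : (l' : ℕ) = k then
            W k (Fin.cast (congrArg n hl) a) (Fin.cast (congrArg n hl') a')
          else 0
        else
          if (⟨l, a⟩ : (k : Fin (K + 1)) × Fin (n k)) = ⟨l', a'⟩ then 1 else 0
    | Sum.inl ⟨l, a⟩, Sum.inr _ =>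
        if hl : (l : ℕ) = k + 1 then b k (Fin.cast (congrArg n hl) a) else 0
    | Sum.inr _, Sum.inl _ => 0
    | Sum.inr _, Sum.inr _ => 1

/-- The synchronous iteration `h^{(k)} = f(A_k h^{(k-1)})`, started from
`h^{(0)} = (x, 0, …, 0, 1)`, with the activation `f` applied only to the coordinates
updated at step `k` (those of block `k`) — and, as in an MLP, not at the final step `K` —
and with the bias coordinate held at `1`. -/
def mlpGnmState (K : ℕ) (n : ℕ → ℕ)
    (W : (k : ℕ) → Matrix (Fin (n (k + 1))) (Fin (n k)) ℝ)
    (b : (k : ℕ) → Fin (n (k + 1)) → ℝ) (f : ℝ → ℝ) (x : Fin (n 0) → ℝ) :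
    ℕ → MLPNode K n → ℝ
  | 0 => fun i =>
      match i with
      | Sum.inl ⟨l, a⟩ =>
          if hl : (l : ℕ) = 0 then x (Fin.cast (congrArg n hl) a) else 0
      | Sum.inr _ => 1
  | k + 1 => fun i =>
      match i with
      | Sum.inr _ => 1
      | Sum.inl ⟨l, a⟩ =>
          let v := (mlpBlockMat K n W b k).mulVec
            (mlpGnmState K n W b f x k) (Sum.inl ⟨l, a⟩)
          if (l : ℕ) = k + 1 ∧ k + 1 < K then f v else v

/-- The `K`-layer MLP `T_K ∘ f ∘ T_{K-1} ∘ ⋯ ∘ f ∘ T_1`, `T_k(z) = W_k z + b_k`,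
computed layer by layer. -/
def mlpState (n : ℕ → ℕ)
    (W : (k : ℕ) → Matrix (Fin (n (k + 1))) (Fin (n k)) ℝ)
    (b : (k : ℕ) → Fin (n (k + 1)) → ℝ) (f : ℝ → ℝ) (x : Fin (n 0) → ℝ) :
    (k : ℕ) → Fin (n k) → ℝ
  | 0 => x
  | k + 1 => fun i =>
      (W k).mulVec
        (if k = 0 then mlpState n W b f x k else fun j => f (mlpState n W b f x k j)) i
        + b k i

/-!
The step from `h^{(k)}` to `h^{(k+1)}` overwrites only block `k + 1`, and the rows of `A_k`
there read nothing but block `k` and the bias node, whose value stays `1`. Hence block `m`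
of `h^{(m)}` is the input of layer `m + 1` of the MLP (the activated hidden layer `m`), and
block `K` of `h^{(K)}` is the MLP output; what the other blocks hold never matters.
-/

section

open Matrix

variable {K : ℕ} {n : ℕ → ℕ}
  (W : (k : ℕ) → Matrix (Fin (n (k + 1))) (Fin (n k)) ℝ)
  (b : (k : ℕ) → Fin (n (k + 1)) → ℝ) (f : ℝ → ℝ) (x : Fin (n 0) → ℝ)

def gnmBlock (h : MLPNode K n → ℝ) (k : ℕ) (hk : k ≤ K) : Fin (n k) → ℝ :=
  fun a => h (Sum.inl ⟨⟨k, Nat.lt_succ_of_le hk⟩, a⟩)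

def mlpLayerInput (k : ℕ) : Fin (n k) → ℝ :=
  if k = 0 then mlpState n W b f x k else fun j => f (mlpState n W b f x k j)

theorem mlpState_succ (k : ℕ) :
    mlpState n W b f x (k + 1) = W k *ᵥ mlpLayerInput W b f x k + b k :=
  rfl

theorem mlpLayerInput_of_ne_zero {k : ℕ} (hk : k ≠ 0) :
    mlpLayerInput W b f x k = f ∘ mlpState n W b f x k :=
  if_neg hk

theorem mlpGnmState_inr (m : ℕ) (u : Unit) :
    mlpGnmState K n W b f x m (Sum.inr u) = 1 := by
  cases m <;> rfl

theorem gnmBlock_mlpBlockMat_mulVec {k : ℕ} (hk : k < K) (h : MLPNode K n → ℝ) :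
    gnmBlock (mlpBlockMat K n W b k *ᵥ h) (k + 1) hk =
      W k *ᵥ gnmBlock h k hk.le + h (Sum.inr ()) • b k := by
  funext a
  have hblock : ∀ l : Fin (K + 1), l ≠ ⟨k, by omega⟩ → ∀ a' : Fin (n l),
      mlpBlockMat K n W b k (Sum.inl ⟨⟨k + 1, by omega⟩, a⟩) (Sum.inl ⟨l, a'⟩) = 0 := by
    intro l hl a'
    have hlk : (l : ℕ) ≠ k := fun h => hl (Fin.ext h)
    simp [mlpBlockMat, hlk]
  simp only [gnmBlock, mulVec, dotProduct, Fintype.sum_sum_type, Fintype.sum_sigma]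
  rw [Finset.sum_eq_single ⟨k, by omega⟩ (fun l _ hl => by simp [hblock l hl]) (by simp)]
  simp [mlpBlockMat, mulVec, dotProduct, gnmBlock, mul_comm]

theorem gnmBlock_mlpGnmState_succ {k : ℕ} (hk : k < K) :
    gnmBlock (mlpGnmState K n W b f x (k + 1)) (k + 1) hk =
      if k + 1 < K then f ∘ (W k *ᵥ gnmBlock (mlpGnmState K n W b f x k) k hk.le + b k)
      else W k *ᵥ gnmBlock (mlpGnmState K n W b f x k) k hk.le + b k := by
  funext a
  have hv := congrFun (gnmBlock_mlpBlockMat_mulVec W b hk (mlpGnmState K n W b f x k)) a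
  rw [mlpGnmState_inr, one_smul] at hv
  show (if (k + 1 = k + 1 ∧ k + 1 < K) then f _ else _) = _
  rw [gnmBlock] at hv
  rw [hv]
  simp only [true_and]
  split_ifs <;> rfl

theorem gnmBlock_mlpGnmState {m : ℕ} (hm : m ≤ K) :
    gnmBlock (mlpGnmState K n W b f x m) m hm =
      if m < K then mlpLayerInput W b f x m else mlpState n W b f x m := by
  induction m with
  | zero => split_ifs <;> rfl
  | succ k ih =>
    have hk : k < K := by omega
    rw [gnmBlock_mlpGnmState_succ W b f x hk, ih hk.le, if_pos hk, ← mlpState_succ,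
      mlpLayerInput_of_ne_zero W b f x k.succ_ne_zero]

end

theorem gnm_simulates_mlp_general (K : ℕ) (n : ℕ → ℕ)
    (W : (k : ℕ) → Matrix (Fin (n (k + 1))) (Fin (n k)) ℝ)
    (b : (k : ℕ) → Fin (n (k + 1)) → ℝ) (f : ℝ → ℝ) :
    ∀ (x : Fin (n 0) → ℝ) (j : Fin (n K)),
      mlpGnmState K n W b f x K (Sum.inl ⟨Fin.last K, j⟩) =
        mlpState n W b f x K j := by
  intro x j
  have := congrFun (gnmBlock_mlpGnmState W b f x le_rfl) j
  rwa [if_neg (lt_irrefl K)] at this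

/-- Theorem 2 of the paper: the synchronous GNM iteration on the block
matrices `A_1, …, A_K`, started from `(x, 0, …, 0, 1)`, yields after `K` steps output
coordinates (block `K`) equal to the MLP output `T_K ∘ f ∘ ⋯ ∘ f ∘ T_1 (x)`. -/
theorem gnm_simulates_mlp (K : ℕ) (hK : 1 ≤ K) (n : ℕ → ℕ)
    (W : (k : ℕ) → Matrix (Fin (n (k + 1))) (Fin (n k)) ℝ)
    (b : (k : ℕ) → Fin (n (k + 1)) → ℝ) (f : ℝ → ℝ) :
    ∀ (x : Fin (n 0) → ℝ) (j : Fin (n K)),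
      mlpGnmState K n W b f x K (Sum.inl ⟨Fin.last K, j⟩) =
        mlpState n W b f x K j :=
  gnm_simulates_mlp_general K n W b f
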